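/- arXiv:1910.10782 — 6 statements merged into one kernel-verified Lean document; each statement's English description precedes it below -/
import Mathlib

section
/- The function g(x) = x·cot(x) is strictly decreasing on the interval (0, π). -/
open Real

lemma xcot_hasDeriv {x : ℝ} (hx : x ∈ Set.Ioo 0 π) :
    HasDerivAt (fun x : ℝ => x * (Real.cos x / Real.sin x))
      ((Real.sin x * Real.cos x - x) / Real.sin x ^ 2) x := by
  have hs : Real.sin x ≠ 0 := (Real.sin_pos_of_pos_of_lt_pi hx.1 hx.2).ne'
  have h1 : HasDerivAt (fun x : ℝ => x * Real.cos x)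
      (1 * Real.cos x + x * (-Real.sin x)) x :=
    (hasDerivAt_id x).mul (Real.hasDerivAt_cos x)
  have h2 := h1.div (Real.hasDerivAt_sin x) hs
  have heq : (fun y : ℝ => y * (Real.cos y / Real.sin y))
      = fun y : ℝ => y * Real.cos y / Real.sin y := by
    funext y; ring
  rw [heq]
  refine h2.congr_deriv (Eq.symm ?_)
  have hp := Real.sin_sq_add_cos_sq x
  linear_combination (x / Real.sin x ^ 2) * hp

/-- x ↦ x · cot x is strictly decreasing on (0, π). -/
theorem xcot_strictAntiOn :
    StrictAntiOn (fun x : ℝ => x * (Real.cos x / Real.sin x)) (Set.Ioo 0 π) := by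
  apply strictAntiOn_of_deriv_neg (convex_Ioo 0 π)
  · apply ContinuousOn.mul continuousOn_id
    apply ContinuousOn.div Real.continuousOn_cos Real.continuousOn_sin
    intro x hx
    exact (Real.sin_pos_of_pos_of_lt_pi hx.1 hx.2).ne'
  · intro x hx
    rw [interior_Ioo] at hx
    rw [(xcot_hasDeriv hx).deriv]
    apply div_neg_of_neg_of_pos
    · have h2x : Real.sin (2 * x) < 2 * x := Real.sin_lt (by linarith [hx.1])
      rw [Real.sin_two_mul] at h2x
      linarith
    · exact pow_pos (Real.sin_pos_of_pos_of_lt_pi hx.1 hx.2) 2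
end

section
/- Let f : ℝⁿ → ℝ be a C¹ convex function with minimizer x*. If X : [0, ∞) → ℝⁿ solves the gradient flow Ẋ = −∇f(X) with X(0) = x₀, then f(X(t)) − f(x*) ≤ ‖x₀ − x*‖²/(2t) for all t > 0. -/
open scoped RealInnerProductSpace

/-- Gradient flow on a convex C¹ function: f(X(t)) − f(x*) ≤ ‖x₀ − x*‖²/(2t). -/
theorem gradient_flow_convex {n : ℕ}
    (f : EuclideanSpace ℝ (Fin n) → ℝ) (g : EuclideanSpace ℝ (Fin n) → EuclideanSpace ℝ (Fin n))
    (hf : ∀ x, HasGradientAt f (g x) x)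
    (hconv : ∀ x y, f x - f y ≥ ⟪g y, x - y⟫)
    (xstar : EuclideanSpace ℝ (Fin n)) (hmin : ∀ x, f xstar ≤ f x)
    (X : ℝ → EuclideanSpace ℝ (Fin n)) (x₀ : EuclideanSpace ℝ (Fin n))
    (hX0 : X 0 = x₀)
    (hX : ∀ t : ℝ, 0 ≤ t → HasDerivAt X (-(g (X t))) t) :
    ∀ t : ℝ, 0 < t →
      f (X t) - f xstar ≤ ‖x₀ - xstar‖ ^ 2 / (2 * t) := by
  set E : ℝ → ℝ := fun t => t * (f (X t) - f xstar) + ⟪X t - xstar, X t - xstar⟫ / 2 with hE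
  have hderiv : ∀ t : ℝ, 0 ≤ t → HasDerivAt E
      ((f (X t) - f xstar) + t * ⟪g (X t), -(g (X t))⟫
        + ⟪X t - xstar, -(g (X t))⟫) t := by
    intro t ht
    have hfX : HasDerivAt (fun s => f (X s)) ⟪g (X t), -(g (X t))⟫ t := by
      have := (hf (X t)).hasFDerivAt.comp_hasDerivAt t (hX t ht)
      simp at this ⊢; exact this
    have hXd : HasDerivAt (fun s => X s - xstar) (-(g (X t))) t :=
      (hX t ht).sub_const xstar
    have hin : HasDerivAt (fun s => ⟪X s - xstar, X s - xstar⟫)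
        (⟪X t - xstar, -(g (X t))⟫ + ⟪-(g (X t)), X t - xstar⟫) t :=
      hXd.inner ℝ hXd
    have h1 : HasDerivAt (fun s => s * (f (X s) - f xstar))
        (1 * (f (X t) - f xstar) + t * ⟪g (X t), -(g (X t))⟫) t :=
      (hasDerivAt_id t).mul (hfX.sub_const _)
    have := h1.add (hin.div_const 2)
    refine this.congr_deriv ?_
    rw [real_inner_comm (-(g (X t))) (X t - xstar)]
    ring
  have hderiv_le : ∀ t : ℝ, 0 < t →
      (f (X t) - f xstar) + t * ⟪g (X t), -(g (X t))⟫
        + ⟪X t - xstar, -(g (X t))⟫ ≤ 0 := by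
    intro t ht
    have hc := hconv xstar (X t)
    have h1 : f (X t) - f xstar ≤ ⟪g (X t), X t - xstar⟫ := by
      have : ⟪g (X t), xstar - X t⟫ = -⟪g (X t), X t - xstar⟫ := by
        rw [← inner_neg_right]; congr 1; abel
      linarith [this ▸ hc]
    have h2 : ⟪g (X t), -(g (X t))⟫ = -‖g (X t)‖ ^ 2 := by
      rw [inner_neg_right, real_inner_self_eq_norm_sq]
    have h3 : ⟪X t - xstar, -(g (X t))⟫ = -⟪g (X t), X t - xstar⟫ := by
      rw [inner_neg_right, real_inner_comm]
    rw [h2, h3]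
    nlinarith [sq_nonneg ‖g (X t)‖]
  have hanti : AntitoneOn E (Set.Ici (0 : ℝ)) := by
    apply antitoneOn_of_deriv_nonpos (convex_Ici 0)
    · intro t ht
      exact (hderiv t ht).continuousAt.continuousWithinAt
    · intro t ht
      rw [interior_Ici] at ht
      exact (hderiv t (le_of_lt ht)).differentiableAt.differentiableWithinAt
    · intro t ht
      rw [interior_Ici] at ht
      rw [(hderiv t (le_of_lt ht)).deriv]
      exact hderiv_le t ht
  intro t ht
  have hle : E t ≤ E 0 := hanti Set.self_mem_Ici (le_of_lt ht) (le_of_lt ht)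
  have hE0 : E 0 = ‖x₀ - xstar‖ ^ 2 / 2 := by
    simp only [hE, hX0, zero_mul, zero_add]
    rw [real_inner_self_eq_norm_sq]
  have hnn : (0:ℝ) ≤ ⟪X t - xstar, X t - xstar⟫ := real_inner_self_nonneg
  have : t * (f (X t) - f xstar) ≤ ‖x₀ - xstar‖ ^ 2 / 2 := by
    rw [hE0] at hle; simp only [hE] at hle; linarith
  rw [le_div_iff₀ (by linarith : (0:ℝ) < 2 * t)]
  nlinarith
end

section
/- Let f : ℝⁿ → ℝ be a C¹ function that is α-weakly-quasi-convex with respect to a point x* for some α ∈ (0,1], i.e. α(f(x) − f(x*)) ≤ ⟨∇f(x), x − x*⟩ for all x. If X solves the gradient flow Ẋ = −∇f(X) with X(0) = x₀, then f(X(t)) − f(x*) ≤ ‖x₀ − x*‖²/(2αt) for all t > 0. -/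
open scoped RealInnerProductSpace

/-- Gradient flow on an α-weakly-quasi-convex function:
f(X(t)) − f(x*) ≤ ‖x₀ − x*‖²/(2αt). -/
theorem gradient_flow_weakly_quasi_convex {n : ℕ}
    (f : EuclideanSpace ℝ (Fin n) → ℝ) (g : EuclideanSpace ℝ (Fin n) → EuclideanSpace ℝ (Fin n))
    (hf : ∀ x, HasGradientAt f (g x) x)
    (α : ℝ) (hα0 : 0 < α) (hα1 : α ≤ 1)
    (xstar : EuclideanSpace ℝ (Fin n))
    (hwqc : ∀ x, α * (f x - f xstar) ≤ ⟪g x, x - xstar⟫)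
    (X : ℝ → EuclideanSpace ℝ (Fin n)) (x₀ : EuclideanSpace ℝ (Fin n))
    (hX0 : X 0 = x₀)
    (hX : ∀ t : ℝ, 0 ≤ t → HasDerivAt X (-(g (X t))) t) :
    ∀ t : ℝ, 0 < t →
      f (X t) - f xstar ≤ ‖x₀ - xstar‖ ^ 2 / (2 * α * t) := by
  set E : ℝ → ℝ := fun t => α * t * (f (X t) - f xstar) + ⟪X t - xstar, X t - xstar⟫ / 2 with hE
  set E' : ℝ → ℝ := fun t => α * (f (X t) - f xstar) + α * t * (-(‖g (X t)‖ ^ 2))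
      + ⟪X t - xstar, -(g (X t))⟫
  have hderiv : ∀ t : ℝ, 0 ≤ t → HasDerivAt E (E' t) t := by
    intro t ht
    have h1 : HasDerivAt (fun s => f (X s)) (-(‖g (X t)‖ ^ 2)) t := by
      have := (hf (X t)).hasFDerivAt.comp_hasDerivAt t (hX t ht)
      simpa only [Function.comp_def, InnerProductSpace.toDual_apply_apply, inner_neg_right,
        real_inner_self_eq_norm_sq] using this
    have h2 : HasDerivAt (fun s => α * s * (f (X s) - f xstar))
        (α * (f (X t) - f xstar) + α * t * (-(‖g (X t)‖ ^ 2))) t := by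
      have ha : HasDerivAt (fun s : ℝ => α * s) α t := by
        simpa using (hasDerivAt_id t).const_mul α
      exact (ha.mul (h1.sub_const (f xstar))).congr_deriv (by ring)
    have h3 : HasDerivAt (fun s => X s - xstar) (-(g (X t))) t :=
      (hX t ht).sub_const xstar
    have h4 : HasDerivAt (fun s => ⟪X s - xstar, X s - xstar⟫ / 2)
        (⟪X t - xstar, -(g (X t))⟫) t := by
      have := (h3.inner ℝ h3).div_const 2
      refine this.congr_deriv ?_
      rw [real_inner_comm (-(g (X t))) (X t - xstar)]
      ring
    exact h2.add h4
  have hE'le : ∀ t : ℝ, 0 ≤ t → E' t ≤ 0 := by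
    intro t ht
    have h1 := hwqc (X t)
    have h2 : (0:ℝ) ≤ α * t * ‖g (X t)‖ ^ 2 := by positivity
    have : ⟪X t - xstar, -(g (X t))⟫ = -⟪g (X t), X t - xstar⟫ := by
      rw [inner_neg_right, real_inner_comm]
    simp only [E', this]
    nlinarith
  have hanti : AntitoneOn E (Set.Ici 0) := by
    apply antitoneOn_of_hasDerivWithinAt_nonpos (convex_Ici 0) (f' := E')
    · intro t ht
      exact ((hderiv t ht).continuousAt).continuousWithinAt
    · intro t ht
      rw [interior_Ici] at ht
      exact ((hderiv t (le_of_lt ht)).hasDerivWithinAt)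
    · intro t ht
      rw [interior_Ici] at ht
      exact hE'le t (le_of_lt ht)
  intro t ht
  have hEt : E t ≤ E 0 := hanti Set.self_mem_Ici (le_of_lt ht) (le_of_lt ht)
  have hE0 : E 0 = ‖x₀ - xstar‖ ^ 2 / 2 := by
    simp only [hE, hX0, mul_zero, zero_mul, zero_add, real_inner_self_eq_norm_sq]
  have hinner : (0:ℝ) ≤ ⟪X t - xstar, X t - xstar⟫ := real_inner_self_nonneg
  have key : α * t * (f (X t) - f xstar) ≤ ‖x₀ - xstar‖ ^ 2 / 2 := by
    have h5 : α * t * (f (X t) - f xstar) ≤ E t := by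
      simp only [hE]; linarith
    exact h5.trans (hE0 ▸ hEt)
  rw [le_div_iff₀ (by positivity : (0:ℝ) < 2 * α * t)]
  nlinarith [key]
end

section
/- Let f : ℝⁿ → ℝ be a C² convex function with minimizer x*. Any solution of the ODE Ẍ + (3/t)Ẋ + ∇f(X) = 0 with X(0) = x₀, Ẋ(0) = 0 satisfies f(X(t)) − f(x*) ≤ 2‖x₀ − x*‖²/t² for all t > 0. -/
open scoped RealInnerProductSpace

open Set Filter Topology in
set_option maxHeartbeats 1000000 in
/-- Accelerated flow Ẍ + (3/t)Ẋ + ∇f(X) = 0 on a convex C² function: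
f(X(t)) − f(x*) ≤ 2‖x₀ − x*‖²/t². -/
theorem accelerated_flow_convex {n : ℕ}
    (f : EuclideanSpace ℝ (Fin n) → ℝ) (g : EuclideanSpace ℝ (Fin n) → EuclideanSpace ℝ (Fin n))
    (hf2 : ContDiff ℝ 2 f)
    (hf : ∀ x, HasGradientAt f (g x) x)
    (hconv : ∀ x y, f x - f y ≥ ⟪g y, x - y⟫)
    (xstar : EuclideanSpace ℝ (Fin n)) (hmin : ∀ x, f xstar ≤ f x)
    (X V : ℝ → EuclideanSpace ℝ (Fin n)) (x₀ : EuclideanSpace ℝ (Fin n))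
    (hX0 : X 0 = x₀) (hV0 : V 0 = 0)
    (hX : ∀ t : ℝ, 0 ≤ t → HasDerivAt X (V t) t)
    (hV : ∀ t : ℝ, 0 < t → HasDerivAt V (-((3 / t) • V t) - g (X t)) t) :
    ∀ t : ℝ, 0 < t →
      f (X t) - f xstar ≤ 2 * ‖x₀ - xstar‖ ^ 2 / t ^ 2 := by
  -- continuity of g
  have hgc : Continuous g := by
    have h1 : ∀ x, g x = (InnerProductSpace.toDual ℝ _).symm (fderiv ℝ f x) := by
      intro x
      rw [(hf x).hasFDerivAt.fderiv, LinearIsometryEquiv.symm_apply_apply]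
    rw [funext h1]
    exact (InnerProductSpace.toDual ℝ _).symm.continuous.comp
      (hf2.continuous_fderiv (by norm_num))
  -- continuity of X on [0, ∞)
  have hXc : ∀ t : ℝ, 0 ≤ t → ContinuousAt X t := fun t ht => (hX t ht).continuousAt
  -- bound on g ∘ X on [0,1]
  obtain ⟨M, hM⟩ : ∃ M, ∀ u ∈ Icc (0:ℝ) 1, ‖g (X u)‖ ≤ M := by
    exact isCompact_Icc.exists_bound_of_continuousOn
      (hgc.comp_continuousOn (fun u hu => (hXc u hu.1).continuousWithinAt))
  have hM0 : 0 ≤ M := le_trans (norm_nonneg _) (hM 0 ⟨le_rfl, zero_le_one⟩)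
  -- derivative of W = t^3 • V t
  set W : ℝ → EuclideanSpace ℝ (Fin n) := fun u => u ^ 3 • V u with hWdef
  have hW : ∀ u : ℝ, 0 < u → HasDerivAt W (-(u ^ 3 • g (X u))) u := by
    intro u hu
    have h1 := (hasDerivAt_pow 3 u).smul (hV u hu)
    refine HasDerivAt.congr_deriv h1 ?_
    have hu' : u ≠ 0 := hu.ne'
    match_scalars <;> field_simp <;> ring
  -- Lipschitz-type bound on W
  have hlip : ∀ s t : ℝ, 0 < s → s ≤ t → t ≤ 1 → ‖W t - W s‖ ≤ M * t ^ 3 * (t - s) := by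
    intro s t hs hst ht1
    have h := Convex.norm_image_sub_le_of_norm_hasDerivWithin_le
      (f := W) (f' := fun u => -(u ^ 3 • g (X u))) (s := Icc s t) (C := M * t ^ 3)
      (fun u hu => ((hW u (lt_of_lt_of_le hs hu.1)).hasDerivWithinAt))
      (fun u hu => by
        rw [norm_neg, norm_smul]
        have hu0 : 0 < u := lt_of_lt_of_le hs hu.1
        have h1 : ‖(u:ℝ) ^ 3‖ = u ^ 3 := abs_of_nonneg (by positivity)
        rw [h1]
        have h2 : ‖g (X u)‖ ≤ M := hM u ⟨hu0.le, le_trans hu.2 ht1⟩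
        have h3 : u ^ 3 ≤ t ^ 3 := pow_le_pow_left₀ hu0.le hu.2 3
        calc u ^ 3 * ‖g (X u)‖ ≤ t ^ 3 * M := by
              apply mul_le_mul h3 h2 (norm_nonneg _) (pow_nonneg (hs.le.trans hst) 3)
          _ = M * t ^ 3 := by ring)
      (convex_Icc s t) ⟨le_rfl, hst⟩ ⟨hst, le_rfl⟩
    calc ‖W t - W s‖ ≤ M * t ^ 3 * ‖t - s‖ := h
      _ = M * t ^ 3 * (t - s) := by rw [Real.norm_eq_abs, abs_of_nonneg (by linarith)]
  -- Cauchy at 0+, limit exists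
  obtain ⟨L, hL⟩ : ∃ L, Tendsto W (𝓝[>] (0:ℝ)) (𝓝 L) := by
    have hcauchy : Cauchy (Filter.map W (𝓝[>] (0:ℝ))) := by
      rw [Metric.cauchy_iff]
      refine ⟨Filter.map_neBot, ?_⟩
      intro ε hε
      have h4 : Tendsto (fun δ : ℝ => M * δ ^ 4 + M * δ ^ 4) (𝓝[>] 0) (𝓝 0) := by
        have : Tendsto (fun δ : ℝ => M * δ ^ 4 + M * δ ^ 4) (𝓝 0) (𝓝 (M * 0 ^ 4 + M * 0 ^ 4)) :=
          (((continuous_const.mul (continuous_pow 4)).add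
            (continuous_const.mul (continuous_pow 4))).tendsto 0)
        simpa using this.mono_left nhdsWithin_le_nhds
      have h5 : ∀ᶠ δ : ℝ in 𝓝[>] 0, M * δ ^ 4 + M * δ ^ 4 < ε := h4.eventually_lt_const hε
      have h6 : ∀ᶠ δ : ℝ in 𝓝[>] 0, δ ∈ Ioc (0:ℝ) 1 := Ioc_mem_nhdsGT_of_mem ⟨le_rfl, one_pos⟩
      obtain ⟨δ, hδε, hδ1⟩ := (h5.and h6).exists
      refine ⟨W '' Ioc 0 δ, ?_, ?_⟩
      · exact image_mem_map (Ioc_mem_nhdsGT_of_mem ⟨le_rfl, hδ1.1⟩)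
      · rintro x ⟨a, ha, rfl⟩ y ⟨b, hb, rfl⟩
        have key : ∀ c d : ℝ, 0 < c → c ≤ d → d ≤ δ → ‖W d - W c‖ ≤ M * δ ^ 4 := by
          intro c d hc hcd hd
          calc ‖W d - W c‖ ≤ M * d ^ 3 * (d - c) := hlip c d hc hcd (le_trans hd hδ1.2)
            _ ≤ M * δ ^ 3 * δ := by
                have hd0 : (0:ℝ) ≤ d := hc.le.trans hcd
                have hd3 : d ^ 3 ≤ δ ^ 3 := pow_le_pow_left₀ hd0 hd 3
                have h1 : M * d ^ 3 * (d - c) ≤ M * d ^ 3 * δ :=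
                  mul_le_mul_of_nonneg_left (by linarith) (mul_nonneg hM0 (pow_nonneg hd0 3))
                have h2 : M * d ^ 3 * δ ≤ M * δ ^ 3 * δ := by
                  have := mul_le_mul_of_nonneg_left hd3 hM0
                  exact mul_le_mul_of_nonneg_right this (le_trans hd0 hd)
                linarith
            _ = M * δ ^ 4 := by ring
        rcases le_total a b with hab | hab
        · have := key a b ha.1 hab hb.2
          rw [dist_eq_norm, ← norm_neg]
          simp only [neg_sub]
          calc ‖W b - W a‖ ≤ M * δ ^ 4 := this
            _ < ε := by linarith [mul_nonneg hM0 (pow_nonneg (le_of_lt ha.1) 4)]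
        · have := key b a hb.1 hab ha.2
          rw [dist_eq_norm]
          calc ‖W a - W b‖ ≤ M * δ ^ 4 := this
            _ < ε := by linarith [mul_nonneg hM0 (pow_nonneg (le_of_lt hb.1) 4)]
    obtain ⟨L, hL⟩ := CompleteSpace.complete hcauchy
    exact ⟨L, hL⟩
  -- L = 0
  have hL0 : L = 0 := by
    by_contra hL0
    have hLpos : 0 < ‖L‖ := norm_pos_iff.mpr hL0
    have hev : ∀ᶠ u in 𝓝[>] (0:ℝ), ‖W u - L‖ < ‖L‖ / 2 := by
      have : Tendsto (fun u => ‖W u - L‖) (𝓝[>] (0:ℝ)) (𝓝 ‖L - L‖) :=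
        ((hL.sub_const L).norm)
      simp only [sub_self, norm_zero] at this
      exact this.eventually_lt_const (by linarith)
    obtain ⟨s₁, hs₁mem, hs₁⟩ := mem_nhdsGT_iff_exists_Ioc_subset.mp hev
    set δ : ℝ := min s₁ 1 with hδdef
    have hδpos : 0 < δ := lt_min hs₁mem one_pos
    have hδ1 : δ ≤ 1 := min_le_right _ _
    have hinner : ∀ u ∈ Ioc (0:ℝ) δ, ‖L‖ ^ 2 / 2 ≤ ⟪W u, L⟫ := by
      intro u hu
      have h1 : ‖W u - L‖ < ‖L‖ / 2 := hs₁ ⟨hu.1, le_trans hu.2 (min_le_left _ _)⟩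
      have h2 : ⟪W u, L⟫ = ⟪L, L⟫ + ⟪W u - L, L⟫ := by
        rw [← inner_add_left]
        congr 1
        abel
      have h3 : |⟪W u - L, L⟫| ≤ ‖W u - L‖ * ‖L‖ := abs_real_inner_le_norm _ _
      have h4 : ⟪L, L⟫ = ‖L‖ ^ 2 := real_inner_self_eq_norm_sq L
      nlinarith [abs_nonneg (⟪W u - L, L⟫), neg_abs_le (⟪W u - L, L⟫)]
    set c : ℝ := ‖L‖ ^ 2 / 4 with hcdef
    have hcpos : 0 < c := by positivity
    set ψ : ℝ → ℝ := fun u => ⟪X u, L⟫ + c * (u ^ 2)⁻¹ with hψdef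
    have hψ' : ∀ u ∈ Ioc (0:ℝ) δ, HasDerivAt ψ
        (⟪V u, L⟫ + c * (-(2 * u) / (u ^ 2) ^ 2)) u := by
      intro u hu
      have h1 : HasDerivAt (fun u => ⟪X u, L⟫) (⟪X u, (0:EuclideanSpace ℝ (Fin n))⟫ + ⟪V u, L⟫) u :=
        (hX u hu.1.le).inner ℝ (hasDerivAt_const u L)
      simp only [inner_zero_right, zero_add] at h1
      have h2 : HasDerivAt (fun u : ℝ => (u ^ 2)⁻¹) (-(2 * u ^ 1) / (u ^ 2) ^ 2) u :=
        (hasDerivAt_pow 2 u).inv (pow_ne_zero 2 hu.1.ne')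
      have h3 := h1.add (h2.const_mul c)
      simp [pow_one] at h3
      exact h3
    have hψderiv_nonneg : ∀ u ∈ Ioo (0:ℝ) δ, 0 ≤ ⟪V u, L⟫ + c * (-(2 * u) / (u ^ 2) ^ 2) := by
      intro u hu
      have hu0 : 0 < u := hu.1
      have hWu : ⟪W u, L⟫ = u ^ 3 * ⟪V u, L⟫ := by
        rw [hWdef, real_inner_smul_left]
      have hb := hinner u ⟨hu.1, hu.2.le⟩
      rw [hWu] at hb
      have hVL : ‖L‖ ^ 2 / 2 / u ^ 3 ≤ ⟪V u, L⟫ := by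
        rw [div_le_iff₀ (by positivity)] at *
        nlinarith [pow_pos hu0 3]
      have : c * (-(2 * u) / (u ^ 2) ^ 2) = -(‖L‖ ^ 2 / 2 / u ^ 3) := by
        rw [hcdef]
        field_simp
        ring
      rw [this]
      linarith
    have hmono : MonotoneOn ψ (Ioc (0:ℝ) δ) := by
      apply monotoneOn_of_deriv_nonneg (convex_Ioc _ _)
      · exact fun u hu => (hψ' u hu).continuousAt.continuousWithinAt
      · intro u hu
        rw [interior_Ioc] at hu
        exact ((hψ' u ⟨hu.1, hu.2.le⟩).differentiableAt).differentiableWithinAt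
      · intro u hu
        rw [interior_Ioc] at hu
        rw [(hψ' u ⟨hu.1, hu.2.le⟩).deriv]
        exact hψderiv_nonneg u hu
    have htop : Tendsto ψ (𝓝[>] (0:ℝ)) atTop := by
      have h1 : Tendsto (fun u => ⟪X u, L⟫) (𝓝[>] (0:ℝ)) (𝓝 ⟪x₀, L⟫) := by
        have hc : ContinuousAt (fun u => ⟪X u, L⟫) 0 :=
          (hXc 0 le_rfl).inner continuousAt_const
        have := hc.tendsto.mono_left (nhdsWithin_le_nhds (s := Ioi (0:ℝ)))
        rwa [hX0] at this
      have h2 : Tendsto (fun u : ℝ => c * (u ^ 2)⁻¹) (𝓝[>] (0:ℝ)) atTop := by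
        apply Tendsto.const_mul_atTop hcpos
        apply Tendsto.comp tendsto_inv_nhdsGT_zero
        rw [tendsto_nhdsWithin_iff]
        constructor
        · have : Tendsto (fun u : ℝ => u ^ 2) (𝓝 0) (𝓝 (0 ^ 2)) :=
            (continuous_pow 2).tendsto 0
          simpa using this.mono_left nhdsWithin_le_nhds
        · filter_upwards [self_mem_nhdsWithin] with u hu
          exact pow_pos (mem_Ioi.mp hu) 2
      exact h1.add_atTop h2
    have h2 : ∀ᶠ u in 𝓝[>] (0:ℝ), ψ u ≤ ψ δ := by
      filter_upwards [Ioc_mem_nhdsGT_of_mem ⟨le_rfl, hδpos⟩] with u hu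
      exact hmono hu ⟨hδpos, le_rfl⟩ hu.2
    obtain ⟨u, hu1, hu2⟩ := ((htop.eventually_gt_atTop (ψ δ)).and h2).exists
    linarith
  -- velocity bound near 0
  have hVb : ∀ t ∈ Ioc (0:ℝ) 1, ‖V t‖ ≤ M * t := by
    intro t ht
    have hWb : ‖W t‖ ≤ M * t ^ 3 * t := by
      rw [hL0] at hL
      have h1 : Tendsto (fun s => ‖W t - W s‖) (𝓝[>] (0:ℝ)) (𝓝 ‖W t‖) := by
        have := ((tendsto_const_nhds (x := W t) (f := 𝓝[>] (0:ℝ))).sub hL).norm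
        simpa using this
      apply le_of_tendsto h1
      filter_upwards [Ioc_mem_nhdsGT_of_mem ⟨le_rfl, ht.1⟩] with s hs
      calc ‖W t - W s‖ ≤ M * t ^ 3 * (t - s) := hlip s t hs.1 hs.2 ht.2
        _ ≤ M * t ^ 3 * t := by
            apply mul_le_mul_of_nonneg_left (by linarith [hs.1])
              (mul_nonneg hM0 (pow_nonneg ht.1.le 3))
    have h2 : t ^ 3 * ‖V t‖ ≤ M * t ^ 3 * t := by
      calc t ^ 3 * ‖V t‖ = ‖W t‖ := by
            rw [hWdef, norm_smul, Real.norm_eq_abs, abs_of_nonneg (pow_nonneg ht.1.le 3)]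
        _ ≤ M * t ^ 3 * t := hWb
    have h3 : (0:ℝ) < t ^ 3 := pow_pos ht.1 3
    have h4 : t ^ 3 * ‖V t‖ ≤ t ^ 3 * (M * t) := by nlinarith
    exact le_of_mul_le_mul_left h4 h3
  -- the Lyapunov energy
  set Y : ℝ → EuclideanSpace ℝ (Fin n) := fun u => X u - xstar + (u / 2) • V u with hYdef
  have hY' : ∀ t : ℝ, 0 < t → HasDerivAt Y (-((t / 2) • g (X t))) t := by
    intro t ht
    have h1 := (hX t ht.le).sub_const xstar
    have h2 : HasDerivAt (fun u : ℝ => u / 2) (1 / 2) t := (hasDerivAt_id t).div_const 2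
    have h3 := h2.smul (hV t ht)
    have h4 := h1.add h3
    refine HasDerivAt.congr_deriv h4 ?_
    have ht' : t ≠ 0 := ht.ne'
    match_scalars <;> field_simp <;> ring
  have hfX : ∀ t : ℝ, 0 ≤ t → HasDerivAt (fun u => f (X u)) ⟪g (X t), V t⟫ t := by
    intro t ht
    have h1 := (hf (X t)).hasFDerivAt.comp_hasDerivAt t (hX t ht)
    simp [InnerProductSpace.toDual_apply_apply] at h1
    exact h1
  set E : ℝ → ℝ := fun u => u ^ 2 * (f (X u) - f xstar) + 2 * ⟪Y u, Y u⟫ with hEdef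
  have hE : ∀ t : ℝ, 0 < t →
      HasDerivAt E (2 * t * ((f (X t) - f xstar) - ⟪g (X t), X t - xstar⟫)) t := by
    intro t ht
    have h2 := (hasDerivAt_pow 2 t).mul ((hfX t ht.le).sub_const (f xstar))
    have h3 := ((hY' t ht).inner ℝ (hY' t ht)).const_mul 2
    have h4 := h2.add h3
    refine HasDerivAt.congr_deriv h4 ?_
    have hYt : Y t = X t - xstar + (t / 2) • V t := rfl
    rw [hYt]
    simp only [inner_neg_right, inner_neg_left, real_inner_smul_right, real_inner_smul_left,
      inner_add_left, inner_sub_left, inner_add_right, inner_sub_right]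
    rw [real_inner_comm (V t) (g (X t)), real_inner_comm (X t) (g (X t)),
      real_inner_comm xstar (g (X t))]
    push_cast
    ring
  have hanti : AntitoneOn E (Ioi (0:ℝ)) := by
    apply antitoneOn_of_deriv_nonpos (convex_Ioi 0)
    · exact fun u hu => (hE u hu).continuousAt.continuousWithinAt
    · intro u hu
      rw [interior_Ioi] at hu
      exact (hE u hu).differentiableAt.differentiableWithinAt
    · intro u hu
      rw [interior_Ioi] at hu
      rw [(hE u hu).deriv]
      have hc := hconv xstar (X u)
      have h7 : ⟪g (X u), xstar - X u⟫ = -⟪g (X u), X u - xstar⟫ := by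
        rw [← inner_neg_right]
        congr 1
        abel
      rw [h7] at hc
      have h8 : (f (X u) - f xstar) - ⟪g (X u), X u - xstar⟫ ≤ 0 := by linarith
      have h9 : (0:ℝ) ≤ 2 * u := by linarith [mem_Ioi.mp hu]
      exact mul_nonpos_of_nonneg_of_nonpos h9 h8
  -- limit of E at 0+
  have hXlim : Tendsto X (𝓝[>] (0:ℝ)) (𝓝 x₀) := by
    have := (hX 0 le_rfl).continuousAt.tendsto.mono_left (nhdsWithin_le_nhds (s := Ioi (0:ℝ)))
    rwa [hX0] at this
  have hsV : Tendsto (fun s : ℝ => (s / 2) • V s) (𝓝[>] (0:ℝ)) (𝓝 0) := by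
    apply squeeze_zero_norm' (a := fun s => M / 2 * s ^ 2)
    · filter_upwards [Ioc_mem_nhdsGT_of_mem (⟨le_rfl, one_pos⟩ : (0:ℝ) ∈ Ico 0 1)] with s hs
      rw [norm_smul, Real.norm_eq_abs, abs_of_nonneg (by linarith [hs.1] : (0:ℝ) ≤ s / 2)]
      calc s / 2 * ‖V s‖ ≤ s / 2 * (M * s) := by
            apply mul_le_mul_of_nonneg_left (hVb s hs) (by linarith [hs.1])
        _ = M / 2 * s ^ 2 := by ring
    · have : Tendsto (fun s : ℝ => M / 2 * s ^ 2) (𝓝 0) (𝓝 (M / 2 * 0 ^ 2)) :=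
        (continuous_const.mul (continuous_pow 2)).tendsto 0
      simpa using this.mono_left nhdsWithin_le_nhds
  have hYlim : Tendsto Y (𝓝[>] (0:ℝ)) (𝓝 (x₀ - xstar)) := by
    have := (hXlim.sub_const xstar).add hsV
    simpa using this
  have hlim : Tendsto E (𝓝[>] (0:ℝ)) (𝓝 (2 * ‖x₀ - xstar‖ ^ 2)) := by
    have h1 : Tendsto (fun s : ℝ => s ^ 2 * (f (X s) - f xstar)) (𝓝[>] (0:ℝ)) (𝓝 0) := by
      have hs2 : Tendsto (fun s : ℝ => s ^ 2) (𝓝[>] (0:ℝ)) (𝓝 0) := by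
        have : Tendsto (fun s : ℝ => s ^ 2) (𝓝 0) (𝓝 ((0:ℝ) ^ 2)) := (continuous_pow 2).tendsto 0
        simpa using this.mono_left nhdsWithin_le_nhds
      have hfs : Tendsto (fun s => f (X s) - f xstar) (𝓝[>] (0:ℝ)) (𝓝 (f x₀ - f xstar)) :=
        ((hf2.continuous.tendsto x₀).comp hXlim).sub_const (f xstar)
      have := hs2.mul hfs
      simpa using this
    have h2 : Tendsto (fun s => 2 * ⟪Y s, Y s⟫) (𝓝[>] (0:ℝ)) (𝓝 (2 * ‖x₀ - xstar‖ ^ 2)) := by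
      have := (Filter.Tendsto.inner (𝕜 := ℝ) hYlim hYlim).const_mul 2
      rwa [real_inner_self_eq_norm_sq] at this
    have := h1.add h2
    simpa [hEdef] using this
  intro t ht
  have h5 : E t ≤ 2 * ‖x₀ - xstar‖ ^ 2 := by
    apply ge_of_tendsto hlim
    filter_upwards [Ioc_mem_nhdsGT_of_mem (⟨le_rfl, ht⟩ : (0:ℝ) ∈ Ico 0 t)] with s hs
    exact hanti hs.1 ht hs.2
  have h6 : (0:ℝ) ≤ ⟪Y t, Y t⟫ := real_inner_self_nonneg
  rw [hEdef] at h5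
  simp only at h5
  rw [le_div_iff₀ (by positivity : (0:ℝ) < t ^ 2)]
  nlinarith
end

section
/- Let f : ℝⁿ → ℝ be C² and μ-strongly convex with minimizer x* and minimum f*. Any solution of Ẍ + 2√μ·Ẋ + ∇f(X) = 0 with X(0) = x₀, Ẋ(0) = 0 satisfies f(X(t)) − f* ≤ e^{−√μ·t}·((μ/2)‖x₀ − x*‖² + f(x₀) − f*) for all t > 0. -/
open scoped RealInnerProductSpace

private lemma aux_inner_ident {E : Type*} [NormedAddCommGroup E] [InnerProductSpace ℝ E]
    (a v w : E) (s μ F : ℝ) (hs : s ≠ 0) (hs2 : s * s = μ) :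
    s * ((μ / 2) * ⟪a + s⁻¹ • v, a + s⁻¹ • v⟫ + F) +
      ((μ / 2) * (⟪a + s⁻¹ • v, -v - s⁻¹ • w⟫ + ⟪-v - s⁻¹ • w, a + s⁻¹ • v⟫) + ⟪w, v⟫) =
    s * ((μ / 2) * ‖a‖ ^ 2 + F - ⟪w, a⟫ - (1 / 2) * ⟪v, v⟫) := by
  simp only [inner_add_left, inner_add_right, inner_sub_left, inner_sub_right,
    inner_neg_left, inner_neg_right, real_inner_smul_left, real_inner_smul_right]
  rw [real_inner_comm v a, real_inner_comm w v, real_inner_comm a w,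
    real_inner_self_eq_norm_sq a, ← hs2]
  field_simp
  ring


/-- Accelerated flow Ẍ + 2√μ·Ẋ + ∇f(X) = 0 on a μ-strongly convex C² function:
f(X(t)) − f* ≤ e^{−√μ t}((μ/2)‖x₀ − x*‖² + f(x₀) − f*). -/
theorem accelerated_flow_strongly_convex {n : ℕ}
    (f : EuclideanSpace ℝ (Fin n) → ℝ) (g : EuclideanSpace ℝ (Fin n) → EuclideanSpace ℝ (Fin n))
    (hf2 : ContDiff ℝ 2 f)
    (hf : ∀ x, HasGradientAt f (g x) x)
    (μ : ℝ) (hμ : 0 < μ)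
    (hsc : ∀ x y, f x - f y ≥ ⟪g y, x - y⟫ + (μ / 2) * ‖x - y‖ ^ 2)
    (xstar : EuclideanSpace ℝ (Fin n)) (hmin : ∀ x, f xstar ≤ f x)
    (X V : ℝ → EuclideanSpace ℝ (Fin n)) (x₀ : EuclideanSpace ℝ (Fin n))
    (hX0 : X 0 = x₀) (hV0 : V 0 = 0)
    (hX : ∀ t : ℝ, 0 ≤ t → HasDerivAt X (V t) t)
    (hV : ∀ t : ℝ, 0 ≤ t → HasDerivAt V (-((2 * Real.sqrt μ) • V t) - g (X t)) t) :
    ∀ t : ℝ, 0 < t →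
      f (X t) - f xstar ≤
        Real.exp (-(Real.sqrt μ * t)) *
          ((μ / 2) * ‖x₀ - xstar‖ ^ 2 + f x₀ - f xstar) := by
  intro T hT
  set s : ℝ := Real.sqrt μ with hsdef
  have hs : 0 < s := Real.sqrt_pos.mpr hμ
  have hs2 : s * s = μ := Real.mul_self_sqrt hμ.le
  set Y : ℝ → EuclideanSpace ℝ (Fin n) := fun t => X t - xstar + s⁻¹ • V t with hYdef
  set φ : ℝ → ℝ :=
    fun t => Real.exp (s * t) * ((μ / 2) * ⟪Y t, Y t⟫ + f (X t) - f xstar) with hφdef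
  -- derivative of φ at any t ≥ 0
  have hY' : ∀ t : ℝ, 0 ≤ t →
      HasDerivAt Y (V t + s⁻¹ • (-((2 * s) • V t) - g (X t))) t := by
    intro t ht
    exact ((hX t ht).sub_const xstar).add ((hV t ht).const_smul s⁻¹)
  have hφ' : ∀ t : ℝ, 0 ≤ t →
      HasDerivAt φ
        (s * Real.exp (s * t) * ((μ / 2) * ⟪Y t, Y t⟫ + f (X t) - f xstar) +
          Real.exp (s * t) *
            ((μ / 2) * (⟪Y t, V t + s⁻¹ • (-((2 * s) • V t) - g (X t))⟫ +
               ⟪V t + s⁻¹ • (-((2 * s) • V t) - g (X t)), Y t⟫) + ⟪g (X t), V t⟫)) t := by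
    intro t ht
    have he : HasDerivAt (fun u => Real.exp (s * u)) (Real.exp (s * t) * s) t := by
      simpa [Function.comp_def] using (Real.hasDerivAt_exp (s * t)).comp t
        (HasDerivAt.const_mul s (hasDerivAt_id t))
    have hq : HasDerivAt (fun u => ⟪Y u, Y u⟫)
        (⟪Y t, V t + s⁻¹ • (-((2 * s) • V t) - g (X t))⟫ +
          ⟪V t + s⁻¹ • (-((2 * s) • V t) - g (X t)), Y t⟫) t :=
      (hY' t ht).inner ℝ (hY' t ht)
    have hfX : HasDerivAt (fun u => f (X u)) ⟪g (X t), V t⟫ t := by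
      simpa [Function.comp_def] using ((hf (X t)).hasFDerivAt.comp_hasDerivAt t (hX t ht))
    have key := he.mul (((hq.const_mul (μ / 2)).add hfX).sub_const (f xstar))
    convert key using 1
    · rfl
    · rfl
    · rfl
    · simp only [Pi.add_apply]; ring
  -- the derivative is nonpositive
  have hneg : ∀ t : ℝ, 0 ≤ t →
      s * Real.exp (s * t) * ((μ / 2) * ⟪Y t, Y t⟫ + f (X t) - f xstar) +
        Real.exp (s * t) *
          ((μ / 2) * (⟪Y t, V t + s⁻¹ • (-((2 * s) • V t) - g (X t))⟫ +
             ⟪V t + s⁻¹ • (-((2 * s) • V t) - g (X t)), Y t⟫) + ⟪g (X t), V t⟫) ≤ 0 := by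
    intro t ht
    have hE := Real.exp_pos (s * t)
    have hsc' : f (X t) - f xstar ≤ ⟪g (X t), X t - xstar⟫ - (μ / 2) * ‖X t - xstar‖ ^ 2 := by
      have h0 := hsc xstar (X t)
      have h2 : ⟪g (X t), xstar - X t⟫ = -⟪g (X t), X t - xstar⟫ := by
        rw [← inner_neg_right]; congr 1; abel
      have h3 : ‖xstar - X t‖ = ‖X t - xstar‖ := by rw [← norm_neg]; congr 1; abel
      rw [h2, h3] at h0
      linarith
    have hder : V t + s⁻¹ • (-((2 * s) • V t) - g (X t)) = -(V t) - s⁻¹ • g (X t) := by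
      have h2 : s⁻¹ * (2 * s) = 2 := by field_simp
      rw [smul_sub, smul_neg, smul_smul, h2]
      module
    have hYt : Y t = (X t - xstar) + s⁻¹ • V t := rfl
    rw [hder]
    have hident :
        s * ((μ / 2) * ⟪Y t, Y t⟫ + f (X t) - f xstar) +
          ((μ / 2) * (⟪Y t, -(V t) - s⁻¹ • g (X t)⟫ + ⟪-(V t) - s⁻¹ • g (X t), Y t⟫) +
            ⟪g (X t), V t⟫) =
          s * ((μ / 2) * ‖X t - xstar‖ ^ 2 + (f (X t) - f xstar) -
            ⟪g (X t), X t - xstar⟫ - (1 / 2) * ⟪V t, V t⟫) := by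
      rw [hYt]
      have h := aux_inner_ident (X t - xstar) (V t) (g (X t)) s μ (f (X t) - f xstar) hs.ne' hs2
      linarith [h]
    have hvv : (0:ℝ) ≤ ⟪V t, V t⟫ := real_inner_self_nonneg
    have hR : (μ / 2) * ‖X t - xstar‖ ^ 2 + (f (X t) - f xstar) -
        ⟪g (X t), X t - xstar⟫ - (1 / 2) * ⟪V t, V t⟫ ≤ 0 := by linarith
    have hC : s * ((μ / 2) * ⟪Y t, Y t⟫ + f (X t) - f xstar) +
        ((μ / 2) * (⟪Y t, -(V t) - s⁻¹ • g (X t)⟫ + ⟪-(V t) - s⁻¹ • g (X t), Y t⟫) +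
          ⟪g (X t), V t⟫) ≤ 0 := by
      rw [hident]
      exact mul_nonpos_of_nonneg_of_nonpos hs.le hR
    nlinarith [mul_nonneg hE.le (neg_nonneg.mpr hC)]
  -- monotonicity of φ on [0, T]
  have hmono : AntitoneOn φ (Set.Icc 0 T) := by
    apply antitoneOn_of_deriv_nonpos (convex_Icc 0 T)
    · exact fun t ht => ((hφ' t ht.1).continuousAt).continuousWithinAt
    · rw [interior_Icc]
      exact fun t ht => ((hφ' t ht.1.le).differentiableAt).differentiableWithinAt
    · rw [interior_Icc]
      intro t ht
      rw [(hφ' t ht.1.le).deriv]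
      exact hneg t ht.1.le
  have hφT : φ T ≤ φ 0 :=
    hmono ⟨le_refl 0, hT.le⟩ ⟨hT.le, le_refl T⟩ hT.le
  have hφ0 : φ 0 = (μ / 2) * ‖x₀ - xstar‖ ^ 2 + f x₀ - f xstar := by
    have hY0 : Y 0 = x₀ - xstar := by
      simp [hYdef, hX0, hV0]
    have h0 : φ 0 = Real.exp (s * 0) * ((μ / 2) * ⟪Y 0, Y 0⟫ + f (X 0) - f xstar) := rfl
    rw [h0, hY0, hX0, real_inner_self_eq_norm_sq]
    simp
  have hYY : (0:ℝ) ≤ ⟪Y T, Y T⟫ := real_inner_self_nonneg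
  have hφTdef : φ T = Real.exp (s * T) * ((μ / 2) * ⟪Y T, Y T⟫ + f (X T) - f xstar) := rfl
  rw [Real.exp_neg, le_inv_mul_iff₀ (Real.exp_pos (s * T))]
  nlinarith [Real.exp_pos (s * T), mul_nonneg (Real.exp_pos (s * T)).le
    (mul_nonneg (by linarith : (0:ℝ) ≤ μ / 2) hYY)]
end

section
/- Let f : ℝⁿ → ℝ be C², μ-strongly convex, L-smooth, with gradient bounded by ℓ on the flow trajectory, and set C = ℓL/2. For any ε > 4C/μ², if h ≤ min{με/C, 1/L}, then the sequence y_k = y(kh) given by the gradient flow ẏ = −∇f(y), y(0) = y₀, is ε-shadowed by the gradient descent orbit x_{k+1} = x_k − h∇f(x_k), x₀ = y₀, that is, ‖x_k − y_k‖ ≤ ε for all k. -/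
set_option maxHeartbeats 2000000

open scoped RealInnerProductSpace
open Set

section Aux

variable {E : Type*} [NormedAddCommGroup E] [InnerProductSpace ℝ E] [CompleteSpace E]

/-- 1-D comparison: if `φ' = D` on `[0,T]` and `D t ≤ a + b t`, then
`φ T ≤ φ 0 + a T + b T²/2`. -/
private lemma ineq_1d (φ D : ℝ → ℝ) (T a b : ℝ) (hT : 0 ≤ T)
    (hφ : ∀ t ∈ Icc (0:ℝ) T, HasDerivAt φ (D t) t)
    (hD : ∀ t ∈ Icc (0:ℝ) T, D t ≤ a + b * t) :
    φ T ≤ φ 0 + a * T + b * T ^ 2 / 2 := by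
  set ψ : ℝ → ℝ := fun t => φ t - a * t - b * t ^ 2 / 2 with hψdef
  have hψd : ∀ t ∈ Icc (0:ℝ) T, HasDerivAt ψ (D t - a - b * t) t := by
    intro t ht
    have h1 : HasDerivAt (fun t : ℝ => a * t) a t := by
      simpa using (hasDerivAt_id t).const_mul a
    have h2 : HasDerivAt (fun t : ℝ => b * t ^ 2 / 2) (b * (2 * t ^ 1) / 2) t :=
      ((hasDerivAt_pow 2 t).const_mul b).div_const 2
    rw [show b * (2 * t ^ 1) / 2 = b * t by ring] at h2
    exact ((hφ t ht).sub h1).sub h2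
  have hanti : AntitoneOn ψ (Icc 0 T) := by
    apply antitoneOn_of_deriv_nonpos (convex_Icc 0 T)
    · exact fun t ht => ((hψd t ht).continuousAt).continuousWithinAt
    · intro t ht
      rw [interior_Icc] at ht
      exact (hψd t (Ioo_subset_Icc_self ht)).differentiableAt.differentiableWithinAt
    · intro t ht
      rw [interior_Icc] at ht
      rw [(hψd t (Ioo_subset_Icc_self ht)).deriv]
      have := hD t (Ioo_subset_Icc_self ht)
      linarith
  have := hanti (left_mem_Icc.2 hT) (right_mem_Icc.2 hT) hT
  simp only [hψdef] at this
  nlinarith [this]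

private lemma hasDerivAt_comp_segment (f : E → ℝ) (g : E → E)
    (hf : ∀ p, HasGradientAt f (g p) p) (x v : E) (t : ℝ) :
    HasDerivAt (fun s : ℝ => f (x + s • v)) ⟪g (x + t • v), v⟫ t := by
  have hpath : HasDerivAt (fun s : ℝ => x + s • v) v t := by
    simpa using ((hasDerivAt_id t).smul_const v).const_add x
  have hfd := (hf (x + t • v)).hasFDerivAt
  have := hfd.comp_hasDerivAt t hpath
  simp only [InnerProductSpace.toDual_apply_apply] at this
  exact this

/-- Descent lemma from a Lipschitz-type bound on the gradient. -/
private lemma descent_lemma (f : E → ℝ) (g : E → E)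
    (hf : ∀ p, HasGradientAt f (g p) p) (K : ℝ)
    (hK : ∀ a b : E, ‖g a - g b‖ ≤ K * ‖a - b‖) (x y : E) :
    f y ≤ f x + ⟪g x, y - x⟫ + K / 2 * ‖y - x‖ ^ 2 := by
  have key := ineq_1d (fun s => f (x + s • (y - x)))
      (fun s => ⟪g (x + s • (y - x)), y - x⟫) 1 ⟪g x, y - x⟫ (K * ‖y - x‖ ^ 2)
      zero_le_one (fun t _ => hasDerivAt_comp_segment f g hf x (y - x) t) ?_
  · have key' : f (x + (1:ℝ) • (y - x)) ≤ f (x + (0:ℝ) • (y - x))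
        + ⟪g x, y - x⟫ * 1 + K * ‖y - x‖ ^ 2 * 1 ^ 2 / 2 := key
    simp only [one_smul, zero_smul, add_zero, add_sub_cancel] at key'
    linarith
  · intro t ht
    show ⟪g (x + t • (y - x)), y - x⟫ ≤ ⟪g x, y - x⟫ + K * ‖y - x‖ ^ 2 * t
    have h0 : ⟪g (x + t • (y - x)), y - x⟫
        = ⟪g x, y - x⟫ + ⟪g (x + t • (y - x)) - g x, y - x⟫ := by
      rw [inner_sub_left]; ring
    have h1 : ⟪g (x + t • (y - x)) - g x, y - x⟫ ≤ K * ‖y - x‖ ^ 2 * t := by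
      calc ⟪g (x + t • (y - x)) - g x, y - x⟫
          ≤ ‖g (x + t • (y - x)) - g x‖ * ‖y - x‖ := real_inner_le_norm _ _
        _ ≤ (K * ‖x + t • (y - x) - x‖) * ‖y - x‖ :=
            mul_le_mul_of_nonneg_right (hK _ _) (norm_nonneg _)
        _ = K * ‖y - x‖ ^ 2 * t := by
            rw [add_sub_cancel_left, norm_smul, Real.norm_eq_abs, abs_of_nonneg ht.1]
            ring
    rw [h0]; linarith

/-- Gradient inequality from monotone gradient (convexity). -/
private lemma grad_lower (f : E → ℝ) (g : E → E)
    (hf : ∀ p, HasGradientAt f (g p) p)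
    (hmono : ∀ a b : E, 0 ≤ ⟪g a - g b, a - b⟫) (x y : E) :
    f x + ⟪g x, y - x⟫ ≤ f y := by
  have key := ineq_1d (fun s => -(f (x + s • (y - x))))
      (fun s => -⟪g (x + s • (y - x)), y - x⟫) 1 (-⟪g x, y - x⟫) 0
      zero_le_one (fun t ht => (hasDerivAt_comp_segment f g hf x (y - x) t).neg) ?_
  · have h0 : -(f (x + (1:ℝ) • (y - x))) ≤ -(f (x + (0:ℝ) • (y - x))) + -⟪g x, y - x⟫ * 1 + 0 := by
      simpa using key
    simp only [one_smul, zero_smul, add_zero, add_sub_cancel] at h0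
    linarith
  · intro t ht
    show -⟪g (x + t • (y - x)), y - x⟫ ≤ -⟪g x, y - x⟫ + 0 * t
    have h1 : 0 ≤ ⟪g (x + t • (y - x)) - g x, y - x⟫ := by
      rcases eq_or_lt_of_le ht.1 with h | h
      · simp [← h]
      · have := hmono (x + t • (y - x)) x
        rw [add_sub_cancel_left, inner_smul_right] at this
        nlinarith
    have h0 : ⟪g (x + t • (y - x)), y - x⟫
        = ⟪g x, y - x⟫ + ⟪g (x + t • (y - x)) - g x, y - x⟫ := by
      rw [inner_sub_left]; ring
    rw [h0]; linarith

/-- Co-coercivity of the gradient of a convex function satisfying the descent lemma. -/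
private lemma cocoercive (f : E → ℝ) (g : E → E)
    (hf : ∀ p, HasGradientAt f (g p) p) (K : ℝ) (hK : 0 < K)
    (hmono : ∀ a b : E, 0 ≤ ⟪g a - g b, a - b⟫)
    (hdesc : ∀ a b : E, f b ≤ f a + ⟪g a, b - a⟫ + K / 2 * ‖b - a‖ ^ 2)
    (x y : E) : (1 / K) * ‖g x - g y‖ ^ 2 ≤ ⟪g x - g y, x - y⟫ := by
  have key : ∀ a b : E, f a + ⟪g a, b - a⟫ + 1 / (2 * K) * ‖g b - g a‖ ^ 2 ≤ f b := by
    intro a b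
    set z := b - K⁻¹ • (g b - g a) with hz
    have h1 := hdesc b z
    have h2 := grad_lower f g hf hmono a z
    have e1 : ⟪g b, z - b⟫ = -(K⁻¹ * ⟪g b, g b - g a⟫) := by
      rw [hz]
      rw [show b - K⁻¹ • (g b - g a) - b = -(K⁻¹ • (g b - g a)) by abel,
        inner_neg_right, real_inner_smul_right]
    have e2 : ‖z - b‖ ^ 2 = K⁻¹ ^ 2 * ‖g b - g a‖ ^ 2 := by
      rw [hz]
      simp [norm_smul, mul_pow, sq_abs]
    have e3 : ⟪g a, z - a⟫ = ⟪g a, b - a⟫ - K⁻¹ * ⟪g a, g b - g a⟫ := by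
      rw [hz, show b - K⁻¹ • (g b - g a) - a = (b - a) - K⁻¹ • (g b - g a) by abel,
        inner_sub_right, real_inner_smul_right]
    have e4 : ⟪g b, g b - g a⟫ - ⟪g a, g b - g a⟫ = ‖g b - g a‖ ^ 2 := by
      rw [← inner_sub_left, real_inner_self_eq_norm_sq]
    have e5 : K / 2 * (K⁻¹ ^ 2 * ‖g b - g a‖ ^ 2) = 1 / (2 * K) * ‖g b - g a‖ ^ 2 := by
      field_simp
    rw [e1, e2, e5] at h1
    rw [e3] at h2
    have e6 : K⁻¹ * ⟪g b, g b - g a⟫ - K⁻¹ * ⟪g a, g b - g a⟫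
        = K⁻¹ * ‖g b - g a‖ ^ 2 := by rw [← mul_sub, e4]
    have e7 : K⁻¹ * ‖g b - g a‖ ^ 2 - 1 / (2 * K) * ‖g b - g a‖ ^ 2
        = 1 / (2 * K) * ‖g b - g a‖ ^ 2 := by field_simp; ring
    nlinarith [h1, h2]
  have k1 := key x y
  have k2 := key y x
  have e8 : ⟪g y, x - y⟫ = -⟪g y, y - x⟫ := by
    rw [show x - y = -(y - x) by abel, inner_neg_right]
  have e9 : ⟪g x - g y, x - y⟫ = -(⟪g x, y - x⟫ + ⟪g y, x - y⟫) := by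
    rw [inner_sub_left, e8, show x - y = -(y - x) by abel, inner_neg_right]; ring
  have e10 : ‖g x - g y‖ = ‖g y - g x‖ := norm_sub_rev _ _
  have hK' : 1 / K = 1 / (2 * K) + 1 / (2 * K) := by field_simp; ring
  have e10' : ‖g x - g y‖ ^ 2 = ‖g y - g x‖ ^ 2 := by rw [e10]
  have hKsplit : 1 / K * ‖g x - g y‖ ^ 2
      = 1 / (2 * K) * ‖g y - g x‖ ^ 2 + 1 / (2 * K) * ‖g x - g y‖ ^ 2 := by
    rw [e10']; field_simp; ring
  rw [hKsplit, e9]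
  linarith [k1, k2]

/-- The gradient descent map is a `(1 - hμ)`-contraction when `hL ≤ 1`. -/
private lemma contraction_step (f : E → ℝ) (g : E → E)
    (hf : ∀ p, HasGradientAt f (g p) p) (μ L : ℝ) (hμ : 0 < μ) (hμL : μ ≤ L)
    (hsc : ∀ a b : E, ⟪g a - g b, a - b⟫ ≥ μ * ‖a - b‖ ^ 2)
    (hsmooth : ∀ a b : E, ‖g a - g b‖ ≤ L * ‖a - b‖)
    (h : ℝ) (hh0 : 0 < h) (hhL : h * L ≤ 1) (a b : E) :
    ‖(a - h • g a) - (b - h • g b)‖ ≤ (1 - h * μ) * ‖a - b‖ := by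
  have hL0 : 0 < L := lt_of_lt_of_le hμ hμL
  set u := a - b with hu
  set v := g a - g b with hv
  have hvu : ⟪v, u⟫ ≥ μ * ‖u‖ ^ 2 := hsc a b
  -- key inequality : ‖v‖² ≤ (L+μ)⟪v,u⟫ - μL‖u‖²
  have key : ‖v‖ ^ 2 ≤ (L + μ) * ⟪v, u⟫ - μ * L * ‖u‖ ^ 2 := by
    rcases eq_or_lt_of_le hμL with hEq | hlt
    · -- μ = L : from Cauchy–Schwarz-type bounds directly
      have h1 : ‖v‖ ^ 2 ≤ (L * ‖u‖) ^ 2 :=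
        pow_le_pow_left₀ (norm_nonneg _) (hsmooth a b) 2
      rw [← hEq] at h1 ⊢
      nlinarith [h1, mul_le_mul_of_nonneg_left hvu hμ.le]
    · -- μ < L : co-coercivity of g - μ • id
      set F : E → ℝ := fun p => f p - μ / 2 * ‖p‖ ^ 2 with hF
      set G : E → E := fun p => g p - μ • p with hG
      have hFinner : F = fun p => f p - μ / 2 * ⟪p, p⟫ := by
        funext p; rw [hF]; rw [real_inner_self_eq_norm_sq]
      have hFgrad : ∀ p : E, HasGradientAt F (G p) p := by
        intro p
        rw [hasGradientAt_iff_hasFDerivAt, hFinner]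
        have h1 := ((hasFDerivAt_id p).inner ℝ (hasFDerivAt_id p)).const_mul (μ / 2)
        have h2 := ((hf p).hasFDerivAt).sub h1
        refine h2.congr_fderiv ?_
        apply ContinuousLinearMap.ext
        intro w
        simp [hG, InnerProductSpace.toDual_apply_apply, inner_sub_left, inner_smul_left,
          real_inner_comm p w]
        ring
      have hmonoG : ∀ p q : E, 0 ≤ ⟪G p - G q, p - q⟫ := by
        intro p q
        have e : G p - G q = (g p - g q) - μ • (p - q) := by
          simp only [hG, smul_sub]; abel
        rw [e, inner_sub_left, real_inner_smul_left]
        have := hsc p q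
        have e2 : ⟪p - q, p - q⟫ = ‖p - q‖ ^ 2 := real_inner_self_eq_norm_sq _
        nlinarith [this]
      have hdescF : ∀ p q : E, F q ≤ F p + ⟪G p, q - p⟫ + (L - μ) / 2 * ‖q - p‖ ^ 2 := by
        intro p q
        have hd := descent_lemma f g hf L hsmooth p q
        have e1 : ‖q‖ ^ 2 = ‖p‖ ^ 2 + 2 * ⟪p, q - p⟫ + ‖q - p‖ ^ 2 := by
          have := norm_sub_sq_real q p
          have e2 : ⟪q, p⟫ = ⟪p, q⟫ := real_inner_comm _ _
          have e3 : ⟪p, q - p⟫ = ⟪p, q⟫ - ⟪p, p⟫ := inner_sub_right _ _ _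
          have e4 : ⟪p, p⟫ = ‖p‖ ^ 2 := real_inner_self_eq_norm_sq _
          nlinarith [this]
        have e5 : ⟪G p, q - p⟫ = ⟪g p, q - p⟫ - μ * ⟪p, q - p⟫ := by
          show ⟪g p - μ • p, q - p⟫ = _
          rw [inner_sub_left, real_inner_smul_left]
        simp only [hF]
        rw [e5, e1]
        nlinarith [hd]
      have hco := cocoercive F G hFgrad (L - μ) (by linarith) hmonoG hdescF a b
      have eG : G a - G b = v - μ • u := by
        simp only [hG, hv, hu, smul_sub]; abel
      have e6 : ⟪v - μ • u, u⟫ = ⟪v, u⟫ - μ * ‖u‖ ^ 2 := by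
        rw [inner_sub_left, real_inner_smul_left, real_inner_self_eq_norm_sq]
      have e7 : ‖v - μ • u‖ ^ 2 = ‖v‖ ^ 2 - 2 * μ * ⟪v, u⟫ + μ ^ 2 * ‖u‖ ^ 2 := by
        rw [norm_sub_sq_real, real_inner_smul_right, norm_smul, Real.norm_eq_abs, mul_pow, sq_abs]
        ring
      rw [eG, hu, e6] at hco
      rw [← hu] at hco
      have e8 : (1 / (L - μ)) * ‖v - μ • u‖ ^ 2 ≤ ⟪v, u⟫ - μ * ‖u‖ ^ 2 := hco
      have hLμ : 0 < L - μ := by linarith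
      have e9 : ‖v - μ • u‖ ^ 2 ≤ (L - μ) * (⟪v, u⟫ - μ * ‖u‖ ^ 2) := by
        rw [div_mul_eq_mul_div, one_mul, div_le_iff₀ hLμ] at e8
        linarith [e8]
      rw [e7] at e9
      nlinarith [e9]
  have expand : ‖u - h • v‖ ^ 2 = ‖u‖ ^ 2 - 2 * h * ⟪v, u⟫ + h ^ 2 * ‖v‖ ^ 2 := by
    rw [norm_sub_sq_real, real_inner_smul_right, norm_smul, Real.norm_eq_abs, mul_pow, sq_abs,
      real_inner_comm u v]
    ring
  have hμ1 : h * μ ≤ 1 := le_trans (mul_le_mul_of_nonneg_left hμL hh0.le) hhL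
  have goal_sq : ‖u - h • v‖ ^ 2 ≤ ((1 - h * μ) * ‖u‖) ^ 2 := by
    rw [expand]
    have hcoef : 0 ≤ 2 * h - h ^ 2 * (L + μ) := by
      nlinarith [mul_nonneg hh0.le (by linarith : (0:ℝ) ≤ 2 - h * (L + μ))]
    have c1 : h ^ 2 * ‖v‖ ^ 2 ≤ h ^ 2 * ((L + μ) * ⟪v, u⟫ - μ * L * ‖u‖ ^ 2) :=
      mul_le_mul_of_nonneg_left key (sq_nonneg h)
    have c2 : (2 * h - h ^ 2 * (L + μ)) * (μ * ‖u‖ ^ 2)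
        ≤ (2 * h - h ^ 2 * (L + μ)) * ⟪v, u⟫ :=
      mul_le_mul_of_nonneg_left hvu hcoef
    linarith [c1, c2]
  have hfinal : ‖u - h • v‖ ≤ (1 - h * μ) * ‖u‖ := by
    have hnn : 0 ≤ (1 - h * μ) * ‖u‖ := mul_nonneg (by linarith) (norm_nonneg _)
    exact le_of_pow_le_pow_left₀ two_ne_zero hnn goal_sq
  have e : (a - h • g a) - (b - h • g b) = u - h • v := by
    rw [hu, hv, smul_sub]; abel
  rw [e]
  exact hfinal

end Aux

open scoped RealInnerProductSpace

/-- Shadowing of the gradient flow by gradient descent: combining the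
pseudo-orbit estimate with the contraction property, the time-h samples of the
gradient flow are ε-shadowed by the gradient descent orbit started at y₀. -/
theorem gradient_flow_shadowing {n : ℕ}
    (f : EuclideanSpace ℝ (Fin n) → ℝ) (g : EuclideanSpace ℝ (Fin n) → EuclideanSpace ℝ (Fin n))
    (H : EuclideanSpace ℝ (Fin n) → EuclideanSpace ℝ (Fin n) →L[ℝ] EuclideanSpace ℝ (Fin n))
    (hf : ∀ x, HasGradientAt f (g x) x)
    (μ L ℓ : ℝ) (hμ : 0 < μ) (hμL : μ ≤ L) (hℓ : 0 < ℓ)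
    (hsc : ∀ x y, ⟪g x - g y, x - y⟫ ≥ μ * ‖x - y‖ ^ 2)
    (hsmooth : ∀ x y, ‖g x - g y‖ ≤ L * ‖x - y‖)
    (y : ℝ → EuclideanSpace ℝ (Fin n)) (y₀ : EuclideanSpace ℝ (Fin n))
    (hy0 : y 0 = y₀)
    (hy : ∀ t : ℝ, 0 ≤ t → HasDerivAt y (-(g (y t))) t)
    (hgrad_bound : ∀ t : ℝ, 0 ≤ t → ‖g (y t)‖ ≤ ℓ)
    (hHess : ∀ t : ℝ, 0 ≤ t → HasFDerivAt g (H (y t)) (y t))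
    (hHess_bound : ∀ t : ℝ, 0 ≤ t → ‖H (y t)‖ ≤ L)
    (C : ℝ) (hC : C = ℓ * L / 2)
    (ε : ℝ) (hε : ε > 4 * C / μ ^ 2)
    (h : ℝ) (hh0 : 0 < h) (hh : h ≤ min (μ * ε / C) (1 / L))
    (x : ℕ → EuclideanSpace ℝ (Fin n)) (hx0 : x 0 = y₀)
    (hx : ∀ k : ℕ, x (k + 1) = x k - h • g (x k)) :
    ∀ k : ℕ, ‖x k - y (k * h)‖ ≤ ε := by
  have hL0 : 0 < L := lt_of_lt_of_le hμ hμL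
  have hC0 : 0 < C := by rw [hC]; positivity
  have hε0 : 0 < ε := lt_trans (by positivity) hε
  have hhC : h ≤ μ * ε / C := le_trans hh (min_le_left _ _)
  have hhL1 : h * L ≤ 1 := by
    have := le_trans hh (min_le_right _ _)
    rw [le_div_iff₀ hL0] at this
    linarith
  have hCh : C * h ≤ μ * ε := by
    have := (le_div_iff₀ hC0).mp hhC
    linarith
  -- local error estimate (pseudo-orbit property)
  have local_err : ∀ t : ℝ, 0 ≤ t → ‖y (t + h) - (y t - h • g (y t))‖ ≤ C * h ^ 2 := by
    intro t ht
    set ψ : ℝ → EuclideanSpace ℝ (Fin n) := fun s => y (t + s) - y t + s • g (y t) with hψ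
    have hyd : ∀ s : ℝ, 0 ≤ s → HasDerivAt (fun s : ℝ => y (t + s)) (-(g (y (t + s)))) s := by
      intro s hs
      have h1 : HasDerivAt (fun s : ℝ => t + s) 1 s := by
        simpa using (hasDerivAt_id s).const_add t
      have h2 := (hy (t + s) (by linarith)).scomp s h1
      simp only [one_smul] at h2
      exact h2
    have hψd : ∀ s : ℝ, 0 ≤ s → HasDerivAt ψ (g (y t) - g (y (t + s))) s := by
      intro s hs
      have h1 : HasDerivAt (fun s : ℝ => s • g (y t)) (g (y t)) s := by
        simpa using (hasDerivAt_id s).smul_const (g (y t))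
      have := ((hyd s hs).sub_const (y t)).add h1
      have e : g (y t) - g (y (t + s)) = -(g (y (t + s))) + g (y t) := by abel
      rw [e]
      exact this
    -- step 1 : ‖y (t+s) - y t‖ ≤ ℓ s on [0,h]
    have step1 : ∀ s ∈ Icc (0:ℝ) h, ‖y (t + s) - y t‖ ≤ ℓ * s := by
      have := norm_image_sub_le_of_norm_deriv_le_segment'
        (f := fun s : ℝ => y (t + s)) (f' := fun s : ℝ => -(g (y (t + s))))
        (a := 0) (b := h)
        (fun s hs => (hyd s hs.1).hasDerivWithinAt)
        (fun s hs => by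
          rw [norm_neg]
          exact hgrad_bound (t + s) (by linarith [hs.1]))
      intro s hs
      have h2 := this s hs
      simpa using h2
    -- step 2 : derivative bound for ψ
    have step2 : ∀ s ∈ Icc (0:ℝ) h, ‖g (y t) - g (y (t + s))‖ ≤ L * ℓ * s := by
      intro s hs
      calc ‖g (y t) - g (y (t + s))‖ = ‖g (y (t + s)) - g (y t)‖ := norm_sub_rev _ _
        _ ≤ L * ‖y (t + s) - y t‖ := by
            have := hsmooth (y (t + s)) (y t)
            simpa using this
        _ ≤ L * (ℓ * s) := mul_le_mul_of_nonneg_left (step1 s hs) (le_of_lt hL0)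
        _ = L * ℓ * s := by ring
    -- inner product trick
    have hψ0 : ψ 0 = 0 := by simp [hψ]
    have key := ineq_1d (fun s => ⟪ψ s, ψ h⟫) (fun s => ⟪g (y t) - g (y (t + s)), ψ h⟫)
        h 0 (L * ℓ * ‖ψ h‖) (le_of_lt hh0)
        (fun s hs => by
          have h1 := (hψd s hs.1).inner ℝ (hasDerivAt_const s (ψ h))
          simpa using h1)
        (fun s hs => by
          have h1 : ⟪g (y t) - g (y (t + s)), ψ h⟫ ≤ ‖g (y t) - g (y (t + s))‖ * ‖ψ h‖ :=
            real_inner_le_norm _ _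
          have h2 := mul_le_mul_of_nonneg_right (step2 s hs) (norm_nonneg (ψ h))
          calc ⟪g (y t) - g (y (t + s)), ψ h⟫ ≤ ‖g (y t) - g (y (t + s))‖ * ‖ψ h‖ := h1
            _ ≤ L * ℓ * s * ‖ψ h‖ := h2
            _ = 0 + L * ℓ * ‖ψ h‖ * s := by ring)
    have key' : ⟪ψ h, ψ h⟫ ≤ ⟪ψ 0, ψ h⟫ + 0 * h + L * ℓ * ‖ψ h‖ * h ^ 2 / 2 := key
    rw [hψ0, inner_zero_left, real_inner_self_eq_norm_sq] at key'
    have hnorm : ‖ψ h‖ ^ 2 ≤ C * h ^ 2 * ‖ψ h‖ := by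
      rw [hC]
      nlinarith [key']
    have hgoal : ‖ψ h‖ ≤ C * h ^ 2 := by
      rcases eq_or_lt_of_le (norm_nonneg (ψ h)) with h0 | h0
      · rw [← h0]; positivity
      · nlinarith [hnorm]
    have e : y (t + h) - (y t - h • g (y t)) = ψ h := by
      rw [hψ]; abel
    rw [e]
    exact hgoal
  -- main induction
  intro k
  induction k with
  | zero =>
    simp only [Nat.cast_zero, zero_mul, hy0, hx0, sub_self, norm_zero]
    exact le_of_lt hε0
  | succ k ih =>
    have hkh : (0:ℝ) ≤ (k : ℝ) * h := by positivity
    have hcast : ((k + 1 : ℕ) : ℝ) * h = (k : ℝ) * h + h := by push_cast; ring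
    rw [hcast]
    have e : x (k + 1) - y ((k : ℝ) * h + h)
        = ((x k - h • g (x k)) - (y ((k : ℝ) * h) - h • g (y ((k : ℝ) * h))))
          - (y ((k : ℝ) * h + h) - (y ((k : ℝ) * h) - h • g (y ((k : ℝ) * h)))) := by
      rw [hx k]; abel
    rw [e]
    have h1 := contraction_step f g hf μ L hμ hμL hsc hsmooth h hh0 hhL1 (x k) (y ((k : ℝ) * h))
    have h2 := local_err ((k : ℝ) * h) hkh
    have h3 : ‖(x k - h • g (x k)) - (y ((k : ℝ) * h) - h • g (y ((k : ℝ) * h)))‖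
        ≤ (1 - h * μ) * ε := by
      refine le_trans h1 ?_
      have hμ1 : 0 ≤ 1 - h * μ := by
        nlinarith [mul_le_mul_of_nonneg_left hμL hh0.le]
      exact mul_le_mul_of_nonneg_left ih hμ1
    refine le_trans (norm_sub_le _ _) ?_
    have hfin : (1 - h * μ) * ε + C * h ^ 2 ≤ ε := by nlinarith [hCh]
    linarith [h2, h3, hfin]
end
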